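/- arXiv:0906.5379 — 5 statements merged into one kernel-verified Lean document; each statement's English description precedes it below -/
import Mathlib

section
/- Let (μ_i)_{i≥1} and (ν_i)_{i≥1} be sequences of positive real numbers such that (μ_i) is bounded, ∑_{i=1}^∞ μ_i = +∞, and ν_i → +∞ as i → +∞. Then there exists a sequence (ξ_i)_{i≥1} of nonnegative real numbers such that ∑_{i=1}^∞ ξ_i = +∞, ξ_i ≤ μ_i for all i ≥ 1, and the partial sums ψ_i := ∑_{j=1}^i ξ_j satisfy ψ_i ≤ ν_i for all i ≥ 1. -/
open Filter

/-- Lemma 4.1 of the paper: given a bounded positive non-summable sequence `μ`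
and a positive sequence `ν` tending to infinity, one can find a nonnegative
sequence `ξ` with divergent partial sums, dominated by `μ`, whose partial sums
stay below `ν`. Sequences are indexed by the positive integers. -/
theorem stmt_0 (μ ν : ℕ → ℝ)
    (hμpos : ∀ i, 1 ≤ i → 0 < μ i)
    (hνpos : ∀ i, 1 ≤ i → 0 < ν i)
    (hμbdd : ∃ M : ℝ, ∀ i, 1 ≤ i → μ i ≤ M)
    (hμdiv : Tendsto (fun n => ∑ i ∈ Finset.Icc 1 n, μ i) atTop atTop)
    (hνdiv : Tendsto ν atTop atTop) :
    ∃ ξ : ℕ → ℝ,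
      (∀ i, 1 ≤ i → 0 ≤ ξ i) ∧
      Tendsto (fun n => ∑ i ∈ Finset.Icc 1 n, ξ i) atTop atTop ∧
      (∀ i, 1 ≤ i → ξ i ≤ μ i) ∧
      (∀ i, 1 ≤ i → ∑ j ∈ Finset.Icc 1 i, ξ j ≤ ν i) := by
  classical
  -- monotone minorant of ν
  set m : ℕ → ℝ := fun i => sInf (ν '' Set.Ici (max 1 i)) with hm_def
  have hbdd : ∀ i : ℕ, BddBelow (ν '' Set.Ici (max 1 i)) := by
    intro i
    refine ⟨0, ?_⟩
    rintro x ⟨j, hj, rfl⟩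
    exact (hνpos j (le_trans (le_max_left 1 i) hj)).le
  have hne : ∀ i : ℕ, (ν '' Set.Ici (max 1 i)).Nonempty := by
    intro i; exact ⟨ν (max 1 i), ⟨max 1 i, Set.mem_Ici.2 le_rfl, rfl⟩⟩
  have hm0 : ∀ i, 0 ≤ m i := by
    intro i
    refine le_csInf (hne i) ?_
    rintro x ⟨j, hj, rfl⟩
    exact (hνpos j (le_trans (le_max_left 1 i) hj)).le
  have hmono : ∀ i j, i ≤ j → m i ≤ m j := by
    intro i j hij
    refine csInf_le_csInf (hbdd i) (hne j) ?_
    apply Set.image_mono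
    exact Set.Ici_subset_Ici.2 (max_le_max le_rfl hij)
  have hmν : ∀ i, 1 ≤ i → m i ≤ ν i := by
    intro i hi
    exact csInf_le (hbdd i) ⟨i, by simp only [Set.mem_Ici, max_le_iff]; omega, rfl⟩
  have hmtop : ∀ C : ℝ, ∃ N : ℕ, ∀ i, N ≤ i → C ≤ m i := by
    intro C
    obtain ⟨N, hN⟩ := (hνdiv.eventually_ge_atTop C).exists_forall_of_atTop
    refine ⟨N, fun i hi => ?_⟩
    refine le_csInf (hne i) ?_
    rintro x ⟨j, hj, rfl⟩
    exact hN j (le_trans hi (le_trans (le_max_right 1 i) hj))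
  -- greedy partial sums
  set ψ : ℕ → ℝ := fun n => Nat.rec 0 (fun k p => min (p + μ (k + 1)) (m (k + 1))) n
    with hψ_def
  have hψ0 : ψ 0 = 0 := rfl
  have hψs : ∀ n, ψ (n + 1) = min (ψ n + μ (n + 1)) (m (n + 1)) := fun n => rfl
  have hψm : ∀ n, ψ n ≤ m (n + 1) := by
    intro n
    induction n with
    | zero => simpa [hψ0] using hm0 1
    | succ k _ =>
      rw [hψs k]
      exact le_trans (min_le_right _ _) (hmono _ _ (Nat.le_succ _))
  have hψmono : ∀ n, ψ n ≤ ψ (n + 1) := by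
    intro n
    rw [hψs n]
    exact le_min (le_add_of_nonneg_right (hμpos (n + 1) (by omega)).le) (hψm n)
  -- the sequence ξ
  refine ⟨fun n => ψ n - ψ (n - 1), ?_, ?_, ?_, ?_⟩
  · rintro ⟨⟩ hi
    · omega
    · next k => simpa using hψmono k
  · have hsum : ∀ n, ∑ j ∈ Finset.Icc 1 n, (ψ j - ψ (j - 1)) = ψ n := by
      intro n
      induction n with
      | zero => simp [hψ0]
      | succ k ih =>
        rw [Finset.sum_Icc_succ_top (by omega : 1 ≤ k + 1), ih]
        simp
    simp only [hsum]
    rw [tendsto_atTop]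
    intro C
    obtain ⟨N, hN⟩ := hmtop C
    have hsplit : ∀ n, N ≤ n →
        ∑ j ∈ Finset.Icc 1 N, μ j + ∑ j ∈ Finset.Icc (N + 1) n, μ j
          = ∑ j ∈ Finset.Icc 1 n, μ j := by
      intro n hn
      induction n, hn using Nat.le_induction with
      | base => simp
      | succ n hn ih =>
        rw [Finset.sum_Icc_succ_top (by omega : N + 1 ≤ n + 1),
          Finset.sum_Icc_succ_top (by omega : 1 ≤ n + 1), ← ih]
        ring
    have hkey : ∀ n, N ≤ n →
        min C (ψ N + ∑ j ∈ Finset.Icc (N + 1) n, μ j) ≤ ψ n := by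
      intro n hn
      induction n, hn using Nat.le_induction with
      | base => simpa using min_le_right C (ψ N)
      | succ n hn ih =>
        rw [hψs n, Finset.sum_Icc_succ_top (by omega : N + 1 ≤ n + 1), le_min_iff]
        have hμp := (hμpos (n + 1) (by omega)).le
        constructor
        · have hA : min C (ψ N + (∑ j ∈ Finset.Icc (N + 1) n, μ j + μ (n + 1)))
              ≤ min C (ψ N + ∑ j ∈ Finset.Icc (N + 1) n, μ j) + μ (n + 1) := by
            rcases le_total C (ψ N + ∑ j ∈ Finset.Icc (N + 1) n, μ j) with h | h
            · rw [min_eq_left h]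
              have := min_le_left C (ψ N + (∑ j ∈ Finset.Icc (N + 1) n, μ j + μ (n + 1)))
              linarith
            · rw [min_eq_right h]
              have := min_le_right C (ψ N + (∑ j ∈ Finset.Icc (N + 1) n, μ j + μ (n + 1)))
              linarith
          linarith
        · exact le_trans (min_le_left _ _) (hN (n + 1) (by omega))
    -- eventually ψ N + tail sum ≥ C
    have htail : Tendsto (fun n => ψ N + ∑ j ∈ Finset.Icc (N + 1) n, μ j) atTop atTop := by
      have h1 : Tendsto (fun n => ∑ j ∈ Finset.Icc 1 n, μ j
          + (ψ N - ∑ j ∈ Finset.Icc 1 N, μ j)) atTop atTop :=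
        hμdiv.atTop_add tendsto_const_nhds
      refine h1.congr' ?_
      filter_upwards [eventually_ge_atTop N] with n hn
      linarith [hsplit n hn]
    obtain ⟨N', hN'⟩ := (htail.eventually_ge_atTop C).exists_forall_of_atTop
    filter_upwards [eventually_ge_atTop (max N N')] with n hn
    have h1 : N ≤ n := le_trans (le_max_left _ _) hn
    have h2 : C ≤ ψ N + ∑ j ∈ Finset.Icc (N + 1) n, μ j :=
      hN' n (le_trans (le_max_right _ _) hn)
    have := hkey n h1
    rw [min_eq_left h2] at this
    exact this
  · rintro ⟨⟩ hi
    · omega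
    · next k =>
      have := hψs k
      simp only [Nat.add_sub_cancel]
      rw [hψs k]
      have h := min_le_left (ψ k + μ (k + 1)) (m (k + 1))
      linarith
  · intro i hi
    have hsum : ∀ n, ∑ j ∈ Finset.Icc 1 n, (ψ j - ψ (j - 1)) = ψ n := by
      intro n
      induction n with
      | zero => simp [hψ0]
      | succ k ih =>
        rw [Finset.sum_Icc_succ_top (by omega : 1 ≤ k + 1), ih]
        simp
    rw [hsum]
    obtain ⟨k, rfl⟩ : ∃ k, i = k + 1 := ⟨i - 1, by omega⟩
    calc ψ (k + 1) ≤ m (k + 1) := by rw [hψs]; exact min_le_right _ _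
      _ ≤ ν (k + 1) := hmν _ (by omega)
end

section
/- Let (a_{i,j})_{i,j≥1} be nonnegative reals with a_{i,j} = a_{j,i}, let (c_i)_{i≥1} be nonnegative reals, and let (φ_i)_{i≥1} be real numbers. Define the coagulation terms Q_i := (1/2)·∑_{j=1}^{i−1} a_{i−j,j} c_{i−j} c_j − ∑_{j=1}^∞ a_{i,j} c_i c_j. Assume the double series ∑_{i=1}^∞ ∑_{j=1}^∞ a_{i,j} c_i c_j (|φ_{i+j}| + |φ_i| + |φ_j|) converges. Then ∑_{i=1}^∞ φ_i Q_i = (1/2)·∑_{i=1}^∞ ∑_{j=1}^∞ a_{i,j} c_i c_j (φ_{i+j} − φ_i − φ_j), and in particular all the series appearing converge absolutely. -/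
open Filter

/-- The discrete coagulation operator
`Q_i = (1/2) ∑_{j=1}^{i-1} a_{i-j,j} c_{i-j} c_j - ∑_{j=1}^∞ a_{i,j} c_i c_j`. -/
noncomputable def coagQ (a : ℕ → ℕ → ℝ) (c : ℕ → ℝ) (i : ℕ) : ℝ :=
  (1 / 2) * ∑ j ∈ Finset.Ico 1 i, a (i - j) j * c (i - j) * c j
    - ∑' j : ℕ, a i (j + 1) * c i * c (j + 1)

/-- The fundamental identity (weak formulation) for the coagulation operator:
if `∑_{i,j ≥ 1} a_{i,j} c_i c_j (|φ_{i+j}| + |φ_i| + |φ_j|)` converges, then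
`∑_{i≥1} φ_i Q_i = (1/2) ∑_{i,j≥1} a_{i,j} c_i c_j (φ_{i+j} - φ_i - φ_j)`,
all series converging absolutely. -/
theorem stmt_2 (a : ℕ → ℕ → ℝ) (c φ : ℕ → ℝ)
    (ha : ∀ i j, 0 ≤ a i j) (hsym : ∀ i j, a i j = a j i)
    (hc : ∀ i, 0 ≤ c i)
    (hconv : Summable (fun p : ℕ × ℕ =>
      a (p.1 + 1) (p.2 + 1) * c (p.1 + 1) * c (p.2 + 1) *
        (|φ ((p.1 + 1) + (p.2 + 1))| + |φ (p.1 + 1)| + |φ (p.2 + 1)|))) :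
    Summable (fun i : ℕ => |φ (i + 1) * coagQ a c (i + 1)|) ∧
    Summable (fun p : ℕ × ℕ =>
      |a (p.1 + 1) (p.2 + 1) * c (p.1 + 1) * c (p.2 + 1) *
        (φ ((p.1 + 1) + (p.2 + 1)) - φ (p.1 + 1) - φ (p.2 + 1))|) ∧
    ∑' i : ℕ, φ (i + 1) * coagQ a c (i + 1) =
      (1 / 2) * ∑' p : ℕ × ℕ,
        a (p.1 + 1) (p.2 + 1) * c (p.1 + 1) * c (p.2 + 1) *
          (φ ((p.1 + 1) + (p.2 + 1)) - φ (p.1 + 1) - φ (p.2 + 1)) := by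
  -- abbreviation
  have hF0 : ∀ p : ℕ × ℕ, 0 ≤ a (p.1 + 1) (p.2 + 1) * c (p.1 + 1) * c (p.2 + 1) :=
    fun p => mul_nonneg (mul_nonneg (ha _ _) (hc _)) (hc _)
  set F : ℕ × ℕ → ℝ := fun p => a (p.1 + 1) (p.2 + 1) * c (p.1 + 1) * c (p.2 + 1) with hFdef
  -- comparison principle
  have habs : ∀ ψ : ℕ × ℕ → ℝ,
      (∀ p : ℕ × ℕ, |ψ p| ≤ |φ ((p.1 + 1) + (p.2 + 1))| + |φ (p.1 + 1)| + |φ (p.2 + 1)|) →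
      Summable (fun p => F p * ψ p) := by
    intro ψ hψ
    rw [← summable_abs_iff]
    refine Summable.of_nonneg_of_le (fun p => abs_nonneg _) (fun p => ?_) hconv
    rw [abs_mul, abs_of_nonneg (hF0 p)]
    exact mul_le_mul_of_nonneg_left (hψ p) (hF0 p)
  have hg : Summable (fun p : ℕ × ℕ => F p * φ ((p.1 + 1) + (p.2 + 1))) :=
    habs _ (fun p => by
      have := abs_nonneg (φ (p.1 + 1)); have := abs_nonneg (φ (p.2 + 1)); linarith)
  have h1 : Summable (fun p : ℕ × ℕ => F p * φ (p.1 + 1)) :=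
    habs _ (fun p => by
      have := abs_nonneg (φ ((p.1 + 1) + (p.2 + 1))); have := abs_nonneg (φ (p.2 + 1)); linarith)
  have h2 : Summable (fun p : ℕ × ℕ => F p * φ (p.2 + 1)) :=
    habs _ (fun p => by
      have := abs_nonneg (φ ((p.1 + 1) + (p.2 + 1))); have := abs_nonneg (φ (p.1 + 1)); linarith)
  have hd : Summable (fun p : ℕ × ℕ =>
      F p * (φ ((p.1 + 1) + (p.2 + 1)) - φ (p.1 + 1) - φ (p.2 + 1))) :=
    habs _ (fun p => by
      calc |φ ((p.1 + 1) + (p.2 + 1)) - φ (p.1 + 1) - φ (p.2 + 1)|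
          ≤ |φ ((p.1 + 1) + (p.2 + 1)) - φ (p.1 + 1)| + |φ (p.2 + 1)| := abs_sub _ _
        _ ≤ |φ ((p.1 + 1) + (p.2 + 1))| + |φ (p.1 + 1)| + |φ (p.2 + 1)| := by
            have := abs_sub (φ ((p.1 + 1) + (p.2 + 1))) (φ (p.1 + 1)); linarith)
  -- the loss double series
  have hh3 : Summable (fun p : ℕ × ℕ => φ (p.1 + 1) * F p) :=
    h1.congr (fun p => mul_comm _ _)
  -- marginal lemma
  have marg : ∀ f : ℕ × ℕ → ℝ, Summable f →
      Summable (fun i : ℕ => ∑' j : ℕ, f (i, j)) ∧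
      (∑' p : ℕ × ℕ, f p) = ∑' i : ℕ, ∑' j : ℕ, f (i, j) := by
    intro f hf
    exact ⟨(hf.hasSum.prod_fiberwise fun b => (hf.prod_factor b).hasSum).summable,
      Summable.tsum_prod hf⟩
  -- the gain double series, reindexed onto the triangle
  set H : ℕ × ℕ → ℝ := fun p =>
    if p.2 < p.1 then F (p.1 - p.2 - 1, p.2) * φ (p.1 + 1) else 0 with hHdef
  have he : Function.Injective (fun q : ℕ × ℕ => ((q.1 + q.2 + 1, q.2) : ℕ × ℕ)) := by
    intro q q' h
    simp only [Prod.mk.injEq] at h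
    obtain ⟨h1', h2'⟩ := h
    exact Prod.ext (by omega) h2'
  have hsupp : Function.support H ⊆ Set.range (fun q : ℕ × ℕ => ((q.1 + q.2 + 1, q.2) : ℕ × ℕ)) := by
    intro p hp
    simp only [hHdef, Function.mem_support] at hp
    by_cases h : p.2 < p.1
    · exact ⟨(p.1 - p.2 - 1, p.2), Prod.ext (by simp; omega) rfl⟩
    · simp [h] at hp
  have hcomp : ∀ q : ℕ × ℕ, H (q.1 + q.2 + 1, q.2) = F q * φ ((q.1 + 1) + (q.2 + 1)) := by
    intro q
    have h : q.2 < q.1 + q.2 + 1 := by omega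
    have h' : q.1 + q.2 + 1 - q.2 - 1 = q.1 := by omega
    have h'' : q.1 + q.2 + 1 + 1 = (q.1 + 1) + (q.2 + 1) := by omega
    simp only [hHdef, if_pos h, h', h'']
  have hsupp0 : ∀ x ∉ Set.range (fun q : ℕ × ℕ => ((q.1 + q.2 + 1, q.2) : ℕ × ℕ)), H x = 0 := by
    intro x hx
    by_contra hne
    exact hx (hsupp hne)
  have hH : Summable H := by
    rw [← he.summable_iff hsupp0]
    exact hg.congr (fun q => (hcomp q).symm)
  have htsumH : (∑' p : ℕ × ℕ, H p) = ∑' p : ℕ × ℕ, F p * φ ((p.1 + 1) + (p.2 + 1)) := by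
    rw [← he.tsum_eq hsupp]
    exact tsum_congr (fun q => hcomp q)
  -- row sums of H equal the gain finite sums
  have hrowH : ∀ i : ℕ, (∑' j : ℕ, H (i, j)) =
      φ (i + 1) * ∑ j ∈ Finset.Ico 1 (i + 1), a (i + 1 - j) j * c (i + 1 - j) * c j := by
    intro i
    rw [tsum_eq_sum (s := Finset.range i) (fun j hj => by
      simp only [hHdef]
      rw [if_neg]; simpa using hj)]
    rw [Finset.sum_Ico_eq_sum_range]
    simp only [Nat.add_sub_cancel]
    rw [Finset.mul_sum]
    refine Finset.sum_congr rfl (fun k hk => ?_)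
    have hk' : k < i := Finset.mem_range.mp hk
    have h1' : i + 1 - (1 + k) = i - k := by omega
    have h2' : i - k - 1 + 1 = i - k := by omega
    simp only [hHdef, if_pos hk', hFdef, h1', h2']
    ring
  -- row sums of the loss part
  have hrowL : ∀ i : ℕ, (∑' j : ℕ, φ (i + 1) * F (i, j)) =
      φ (i + 1) * ∑' j : ℕ, a (i + 1) (j + 1) * c (i + 1) * c (j + 1) := by
    intro i
    rw [tsum_mul_left]
  -- pointwise identity
  have key : ∀ i : ℕ, φ (i + 1) * coagQ a c (i + 1) =
      (1 / 2) * (∑' j : ℕ, H (i, j)) - ∑' j : ℕ, φ (i + 1) * F (i, j) := by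
    intro i
    rw [hrowH i, hrowL i]
    unfold coagQ
    ring
  obtain ⟨msH, mtH⟩ := marg H hH
  obtain ⟨msL, mtL⟩ := marg _ hh3
  have hsum : Summable (fun i : ℕ => φ (i + 1) * coagQ a c (i + 1)) := by
    refine Summable.congr ?_ (fun i => (key i).symm)
    exact (msH.mul_left (1 / 2)).sub msL
  refine ⟨hsum.abs, hd.abs, ?_⟩
  -- compute the LHS
  have lhs : (∑' i : ℕ, φ (i + 1) * coagQ a c (i + 1)) =
      (1 / 2) * (∑' p : ℕ × ℕ, F p * φ ((p.1 + 1) + (p.2 + 1))) -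
        ∑' p : ℕ × ℕ, φ (p.1 + 1) * F p := by
    rw [tsum_congr key, Summable.tsum_sub (msH.mul_left (1 / 2)) msL, tsum_mul_left,
      ← mtH, ← mtL, htsumH]
  rw [lhs]
  -- symmetry: ∑ F φ₂ = ∑ F φ₁
  have hswap : (∑' p : ℕ × ℕ, F p * φ (p.2 + 1)) = ∑' p : ℕ × ℕ, F p * φ (p.1 + 1) := by
    rw [← (Equiv.prodComm ℕ ℕ).tsum_eq (fun p : ℕ × ℕ => F p * φ (p.1 + 1))]
    refine tsum_congr (fun p => ?_)
    simp only [Equiv.prodComm_apply, Prod.swap, hFdef]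
    rw [hsym (p.2 + 1) (p.1 + 1)]
    ring
  have hL' : (∑' p : ℕ × ℕ, φ (p.1 + 1) * F p) = ∑' p : ℕ × ℕ, F p * φ (p.1 + 1) :=
    tsum_congr (fun p => mul_comm _ _)
  have hsplit : (∑' p : ℕ × ℕ, F p * (φ ((p.1 + 1) + (p.2 + 1)) - φ (p.1 + 1) - φ (p.2 + 1))) =
      (∑' p : ℕ × ℕ, F p * φ ((p.1 + 1) + (p.2 + 1))) -
        (∑' p : ℕ × ℕ, F p * φ (p.1 + 1)) - (∑' p : ℕ × ℕ, F p * φ (p.2 + 1)) := by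
    rw [show (fun p : ℕ × ℕ => F p * (φ ((p.1 + 1) + (p.2 + 1)) - φ (p.1 + 1) - φ (p.2 + 1))) =
        fun p : ℕ × ℕ => (F p * φ ((p.1 + 1) + (p.2 + 1)) - F p * φ (p.1 + 1)) - F p * φ (p.2 + 1)
        from funext (fun p => by ring)]
    rw [Summable.tsum_sub (hg.sub h1) h2, Summable.tsum_sub hg h1]
  have : (1 / 2 : ℝ) * ∑' p : ℕ × ℕ,
      a (p.1 + 1) (p.2 + 1) * c (p.1 + 1) * c (p.2 + 1) *
        (φ ((p.1 + 1) + (p.2 + 1)) - φ (p.1 + 1) - φ (p.2 + 1)) =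
      (1 / 2) * ∑' p : ℕ × ℕ, F p * (φ ((p.1 + 1) + (p.2 + 1)) - φ (p.1 + 1) - φ (p.2 + 1)) := rfl
  rw [this, hsplit, hswap, hL']
  ring
end

section
/- Let (c_i)_{i≥1} be nonnegative reals with mass density ρ := ∑_{i=1}^∞ i·c_i < +∞. Then ∑_{i=1}^∞ ∑_{j=1}^∞ √(i·j)·c_i·c_j·( i·log(1 + j/i) + j·log(1 + i/j) ) ≤ 2·ρ², the double series converging. (This is the key estimate showing propagation of the moment ∑ i·log(i)·c_i for the pure coagulation equation with kernel a_{i,j} = √(ij).) -/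
open Filter

lemma log_one_add_le_sqrt {x : ℝ} (hx : 0 ≤ x) : Real.log (1 + x) ≤ Real.sqrt x := by
  set t := Real.sqrt x with ht
  have ht0 : 0 ≤ t := Real.sqrt_nonneg x
  have ht2 : t ^ 2 = x := Real.sq_sqrt hx
  have h4 : ∑ i ∈ Finset.range 4, t ^ i / (Nat.factorial i) ≤ Real.exp t :=
    Real.sum_le_exp_of_nonneg ht0 4
  have hexp : 1 + x ≤ Real.exp t := by
    simp [Finset.sum_range_succ, Nat.factorial] at h4
    nlinarith [mul_nonneg ht0 (sq_nonneg (t - 3/2))]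
  have h1x : (0:ℝ) < 1 + x := by linarith
  calc Real.log (1 + x) ≤ Real.log (Real.exp t) := Real.log_le_log h1x hexp
    _ = t := Real.log_exp t

lemma key_ineq {i j : ℝ} (hi : 0 < i) (hj : 0 < j) :
    Real.sqrt (i * j) * (i * Real.log (1 + j / i) + j * Real.log (1 + i / j)) ≤ 2 * (i * j) := by
  have hsi : Real.sqrt i ^ 2 = i := Real.sq_sqrt hi.le
  have hsj : Real.sqrt j ^ 2 = j := Real.sq_sqrt hj.le
  have hsi0 : 0 < Real.sqrt i := Real.sqrt_pos.2 hi
  have hsj0 : 0 < Real.sqrt j := Real.sqrt_pos.2 hj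
  have h1 : i * Real.log (1 + j / i) ≤ Real.sqrt i * Real.sqrt j := by
    have h := log_one_add_le_sqrt (x := j / i) (by positivity)
    rw [Real.sqrt_div hj.le i] at h
    calc i * Real.log (1 + j / i) ≤ i * (Real.sqrt j / Real.sqrt i) :=
          mul_le_mul_of_nonneg_left h hi.le
      _ = Real.sqrt i * Real.sqrt j := by field_simp; nlinarith [hsi]
  have h2 : j * Real.log (1 + i / j) ≤ Real.sqrt i * Real.sqrt j := by
    have h := log_one_add_le_sqrt (x := i / j) (by positivity)
    rw [Real.sqrt_div hi.le j] at h
    calc j * Real.log (1 + i / j) ≤ j * (Real.sqrt i / Real.sqrt j) :=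
          mul_le_mul_of_nonneg_left h hj.le
      _ = Real.sqrt i * Real.sqrt j := by field_simp; nlinarith [hsj]
  rw [Real.sqrt_mul hi.le]
  nlinarith [mul_pos hsi0 hsj0]

/-- The summand `√(ij) c_i c_j (i log(1 + j/i) + j log(1 + i/j))` appearing in
the moment estimate for the coagulation kernel `a_{i,j} = √(ij)`; the pair
`p : ℕ × ℕ` encodes `(i, j) = (p.1 + 1, p.2 + 1)`. -/
noncomputable def sqrtKernelSummand (c : ℕ → ℝ) (p : ℕ × ℕ) : ℝ :=
  Real.sqrt (((p.1 + 1 : ℕ) : ℝ) * ((p.2 + 1 : ℕ) : ℝ)) * c (p.1 + 1) * c (p.2 + 1) *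
    (((p.1 + 1 : ℕ) : ℝ) * Real.log (1 + ((p.2 + 1 : ℕ) : ℝ) / ((p.1 + 1 : ℕ) : ℝ)) +
      ((p.2 + 1 : ℕ) : ℝ) * Real.log (1 + ((p.1 + 1 : ℕ) : ℝ) / ((p.2 + 1 : ℕ) : ℝ)))

/-- If `ρ = ∑_{i≥1} i c_i < ∞`, then
`∑_{i,j≥1} √(ij) c_i c_j (i log(1 + j/i) + j log(1 + i/j)) ≤ 2 ρ²`,
the double series converging. -/
theorem stmt_9 (c : ℕ → ℝ) (hc : ∀ i, 0 ≤ c i)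
    (hρ : Summable (fun i : ℕ => ((i + 1 : ℕ) : ℝ) * c (i + 1))) :
    Summable (sqrtKernelSummand c) ∧
    ∑' p : ℕ × ℕ, sqrtKernelSummand c p ≤
      2 * (∑' i : ℕ, ((i + 1 : ℕ) : ℝ) * c (i + 1)) ^ 2 := by
  set f : ℕ → ℝ := fun i => ((i + 1 : ℕ) : ℝ) * c (i + 1) with hfdef
  have hf0 : ∀ i, 0 ≤ f i := fun i => mul_nonneg (by positivity) (hc _)
  have hnonneg : ∀ p : ℕ × ℕ, 0 ≤ sqrtKernelSummand c p := by
    intro p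
    unfold sqrtKernelSummand
    have h1 : (0:ℝ) ≤ Real.log (1 + ((p.2 + 1 : ℕ) : ℝ) / ((p.1 + 1 : ℕ) : ℝ)) :=
      Real.log_nonneg (le_add_of_nonneg_right (by positivity))
    have h2 : (0:ℝ) ≤ Real.log (1 + ((p.1 + 1 : ℕ) : ℝ) / ((p.2 + 1 : ℕ) : ℝ)) :=
      Real.log_nonneg (le_add_of_nonneg_right (by positivity))
    have := hc (p.1 + 1); have := hc (p.2 + 1)
    positivity
  have hbound : ∀ p : ℕ × ℕ, sqrtKernelSummand c p ≤ 2 * (f p.1 * f p.2) := by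
    intro p
    have hi : (0:ℝ) < ((p.1 + 1 : ℕ) : ℝ) := by positivity
    have hj : (0:ℝ) < ((p.2 + 1 : ℕ) : ℝ) := by positivity
    have hb := key_ineq hi hj
    have hcc : (0:ℝ) ≤ c (p.1 + 1) * c (p.2 + 1) := mul_nonneg (hc _) (hc _)
    have := mul_le_mul_of_nonneg_right hb hcc
    unfold sqrtKernelSummand
    simp only [hfdef]
    nlinarith [this]
  have hg : Summable (fun p : ℕ × ℕ => f p.1 * f p.2) :=
    hρ.mul_of_nonneg hρ hf0 hf0
  have hg2 : Summable (fun p : ℕ × ℕ => 2 * (f p.1 * f p.2)) := hg.mul_left 2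
  have hs : Summable (sqrtKernelSummand c) :=
    Summable.of_nonneg_of_le hnonneg hbound hg2
  refine ⟨hs, ?_⟩
  calc ∑' p : ℕ × ℕ, sqrtKernelSummand c p
      ≤ ∑' p : ℕ × ℕ, 2 * (f p.1 * f p.2) := Summable.tsum_le_tsum hbound hs hg2
    _ = 2 * ∑' p : ℕ × ℕ, f p.1 * f p.2 := tsum_mul_left
    _ = 2 * ((∑' i, f i) * (∑' i, f i)) := by rw [Summable.tsum_mul_tsum hρ hρ hg]
    _ = 2 * (∑' i, f i) ^ 2 := by ring
end

section
/- Let (a_{i,j})_{i,j≥1} be nonnegative reals with a_{i,j} = a_{j,i}, let (ψ_i)_{i≥1} be a nondecreasing sequence of positive reals, and suppose there is C > 0 such that a_{i,j}·(ψ_{i+j} − ψ_i) ≤ C·j for all i, j ≥ 1. Let (c_i)_{i≥1} be nonnegative reals with mass density ρ := ∑_{i=1}^∞ i·c_i < +∞. Then (1/2)·∑_{i=1}^∞ ∑_{j=1}^∞ a_{i,j}·c_i·c_j·((i+j)·ψ_{i+j} − i·ψ_i − j·ψ_j) ≤ C·ρ², the double series being well defined (its positive part converges). -/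
open Filter

set_option maxHeartbeats 1000000 in

/-- If `ψ` is nondecreasing and positive with `a i j (ψ (i+j) - ψ i) ≤ C j`,
and `ρ = ∑_{i≥1} i c_i < ∞`, then
`(1/2) ∑_{i,j≥1} a_{i,j} c_i c_j ((i+j) ψ_{i+j} - i ψ_i - j ψ_j) ≤ C ρ²`,
the double series being well defined (it has nonnegative terms and converges). -/
theorem stmt_10 (a : ℕ → ℕ → ℝ) (ψ c : ℕ → ℝ) (C : ℝ) (hC : 0 < C)
    (ha : ∀ i j, 0 ≤ a i j) (hsym : ∀ i j, a i j = a j i)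
    (hψpos : ∀ i, 1 ≤ i → 0 < ψ i)
    (hψmono : ∀ i j, 1 ≤ i → i ≤ j → ψ i ≤ ψ j)
    (haψ : ∀ i j : ℕ, 1 ≤ i → 1 ≤ j → a i j * (ψ (i + j) - ψ i) ≤ C * (j : ℝ))
    (hc : ∀ i, 0 ≤ c i)
    (hρ : Summable (fun i : ℕ => ((i + 1 : ℕ) : ℝ) * c (i + 1))) :
    Summable (fun p : ℕ × ℕ =>
      a (p.1 + 1) (p.2 + 1) * c (p.1 + 1) * c (p.2 + 1) *
        ((((p.1 + 1 : ℕ) : ℝ) + ((p.2 + 1 : ℕ) : ℝ)) * ψ ((p.1 + 1) + (p.2 + 1)) -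
          ((p.1 + 1 : ℕ) : ℝ) * ψ (p.1 + 1) - ((p.2 + 1 : ℕ) : ℝ) * ψ (p.2 + 1))) ∧
    (1 / 2) * ∑' p : ℕ × ℕ,
        a (p.1 + 1) (p.2 + 1) * c (p.1 + 1) * c (p.2 + 1) *
          ((((p.1 + 1 : ℕ) : ℝ) + ((p.2 + 1 : ℕ) : ℝ)) * ψ ((p.1 + 1) + (p.2 + 1)) -
            ((p.1 + 1 : ℕ) : ℝ) * ψ (p.1 + 1) - ((p.2 + 1 : ℕ) : ℝ) * ψ (p.2 + 1)) ≤
      C * (∑' i : ℕ, ((i + 1 : ℕ) : ℝ) * c (i + 1)) ^ 2 := by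
  set f : ℕ × ℕ → ℝ := fun p =>
      a (p.1 + 1) (p.2 + 1) * c (p.1 + 1) * c (p.2 + 1) *
        ((((p.1 + 1 : ℕ) : ℝ) + ((p.2 + 1 : ℕ) : ℝ)) * ψ ((p.1 + 1) + (p.2 + 1)) -
          ((p.1 + 1 : ℕ) : ℝ) * ψ (p.1 + 1) - ((p.2 + 1 : ℕ) : ℝ) * ψ (p.2 + 1)) with hf
  set g : ℕ × ℕ → ℝ := fun p =>
      (2 * C) * ((((p.1 + 1 : ℕ) : ℝ) * c (p.1 + 1)) * (((p.2 + 1 : ℕ) : ℝ) * c (p.2 + 1)))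
    with hg
  have hcnn : ∀ i : ℕ, (0:ℝ) ≤ ((i + 1 : ℕ) : ℝ) * c (i + 1) := fun i =>
    mul_nonneg (by positivity) (hc _)
  -- key rewriting: the bracket equals i Δ_i + j Δ_j
  have hkey : ∀ i j : ℕ, 1 ≤ i → 1 ≤ j →
      ((i:ℝ) + j) * ψ (i + j) - (i:ℝ) * ψ i - (j:ℝ) * ψ j
        = (i:ℝ) * (ψ (i+j) - ψ i) + (j:ℝ) * (ψ (i+j) - ψ j) := by
    intro i j _ _; ring
  have hfnn : ∀ p : ℕ × ℕ, 0 ≤ f p := by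
    intro ⟨i, j⟩
    have h1 : ψ (i+1) ≤ ψ ((i+1) + (j+1)) := hψmono _ _ (by omega) (by omega)
    have h2 : ψ (j+1) ≤ ψ ((i+1) + (j+1)) := hψmono _ _ (by omega) (by omega)
    simp only [hf]
    apply mul_nonneg (mul_nonneg (mul_nonneg (ha _ _) (hc _)) (hc _))
    rw [hkey _ _ (by omega) (by omega)]
    have := Nat.cast_nonneg (α := ℝ)
    nlinarith [Nat.cast_nonneg (α := ℝ) (i+1), Nat.cast_nonneg (α := ℝ) (j+1)]
  have hfg : ∀ p : ℕ × ℕ, f p ≤ g p := by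
    intro ⟨i, j⟩
    simp only [hf, hg]
    rw [hkey _ _ (by omega) (by omega)]
    have h1 : a (i+1) (j+1) * (ψ ((i+1)+(j+1)) - ψ (i+1)) ≤ C * (j+1 : ℕ) :=
      haψ (i+1) (j+1) (by omega) (by omega)
    have h2 : a (i+1) (j+1) * (ψ ((i+1)+(j+1)) - ψ (j+1)) ≤ C * (i+1 : ℕ) := by
      rw [hsym]
      have := haψ (j+1) (i+1) (by omega) (by omega)
      rwa [Nat.add_comm (j+1) (i+1)] at this
    have hci := hc (i+1); have hcj := hc (j+1)
    have hii : (0:ℝ) ≤ ((i+1:ℕ):ℝ) := Nat.cast_nonneg _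
    have hjj : (0:ℝ) ≤ ((j+1:ℕ):ℝ) := Nat.cast_nonneg _
    nlinarith [mul_nonneg hci hcj, mul_nonneg (mul_nonneg hci hcj) hii,
      mul_nonneg (mul_nonneg hci hcj) hjj]
  have hgsum : Summable g := by
    exact ((hρ.mul_of_nonneg hρ hcnn hcnn).mul_left (2 * C))
  have hfsum : Summable f := Summable.of_nonneg_of_le hfnn hfg hgsum
  refine ⟨hfsum, ?_⟩
  have htsum : ∑' p, f p ≤ ∑' p, g p := Summable.tsum_le_tsum hfg hfsum hgsum
  have hgval : ∑' p, g p = (2 * C) * (∑' i : ℕ, ((i + 1 : ℕ) : ℝ) * c (i + 1)) ^ 2 := by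
    rw [hg]
    rw [tsum_mul_left, ← Summable.tsum_mul_tsum hρ hρ (hρ.mul_of_nonneg hρ hcnn hcnn)]
    ring
  rw [hgval] at htsum
  linarith
end

section
/- Let R: (0,+∞) → [0,+∞) be nondecreasing such that x ↦ R(x)/x is nonincreasing and R(x)/x → 0 as x → +∞, and let C > 0. Suppose (a_{i,j})_{i,j≥2} are nonnegative reals with a_{i,j} = a_{j,i} and a_{i,j} ≤ C·( i·R(log j)/log i + j·R(log i)/log j ) for all integers i, j ≥ 2. Then there exists a bounded function θ: [0,+∞) → (0,+∞) with θ(x) → 0 as x → +∞ such that a_{i,j} ≤ (i+j)·θ(j/i) for all integers j ≥ i ≥ 2. -/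
open Filter

/-- If `R : (0,∞) → [0,∞)` is nondecreasing, `x ↦ R(x)/x` is nonincreasing and
tends to `0` at infinity, and the symmetric nonnegative coefficients satisfy
`a i j ≤ C (i R(log j)/log i + j R(log i)/log j)` for `i, j ≥ 2`, then there is
a bounded positive function `θ` tending to `0` at infinity such that
`a i j ≤ (i+j) θ(j/i)` for all integers `j ≥ i ≥ 2`. -/
theorem stmt_15 (R : ℝ → ℝ) (C : ℝ) (hC : 0 < C) (a : ℕ → ℕ → ℝ)
    (hR0 : ∀ x : ℝ, 0 < x → 0 ≤ R x)
    (hRmono : ∀ x y : ℝ, 0 < x → x ≤ y → R x ≤ R y)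
    (hRquot : ∀ x y : ℝ, 0 < x → x ≤ y → R y / y ≤ R x / x)
    (hRlim : Tendsto (fun x : ℝ => R x / x) atTop (nhds 0))
    (ha : ∀ i j, 0 ≤ a i j) (hsym : ∀ i j, a i j = a j i)
    (haR : ∀ i j : ℕ, 2 ≤ i → 2 ≤ j →
      a i j ≤ C * ((i : ℝ) * R (Real.log (j : ℝ)) / Real.log (i : ℝ) +
        (j : ℝ) * R (Real.log (i : ℝ)) / Real.log (j : ℝ))) :
    ∃ θ : ℝ → ℝ,
      (∀ x : ℝ, 0 ≤ x → 0 < θ x) ∧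
      (∃ M : ℝ, ∀ x : ℝ, 0 ≤ x → θ x ≤ M) ∧
      Tendsto θ atTop (nhds 0) ∧
      ∀ i j : ℕ, 2 ≤ i → i ≤ j →
        a i j ≤ ((i : ℝ) + (j : ℝ)) * θ ((j : ℝ) / (i : ℝ)) := by
  have hL2 : 0 < Real.log 2 := Real.log_pos one_lt_two
  have hφL2 : 0 ≤ R (Real.log 2) / Real.log 2 := div_nonneg (hR0 _ hL2) hL2.le
  refine ⟨fun t => C * (R (Real.log 2) / Real.log 2) *
      ((1 + Real.log (max t 1) / Real.log 2) / max t 1)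
      + C * (R (Real.log (2 * max t 1)) / Real.log (2 * max t 1)) + Real.exp (-t),
      ?_, ?_, ?_, ?_⟩
  · -- positivity
    intro x hx
    have hu : (1:ℝ) ≤ max x 1 := le_max_right _ _
    have hu0 : (0:ℝ) < max x 1 := by linarith
    have hlu : 0 ≤ Real.log (max x 1) := Real.log_nonneg hu
    have h2u : 0 < Real.log (2 * max x 1) := Real.log_pos (by linarith)
    have ht1 : 0 ≤ C * (R (Real.log 2) / Real.log 2) *
        ((1 + Real.log (max x 1) / Real.log 2) / max x 1) :=
      mul_nonneg (mul_nonneg hC.le hφL2)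
        (div_nonneg (add_nonneg zero_le_one (div_nonneg hlu hL2.le)) hu0.le)
    have ht2 : 0 ≤ C * (R (Real.log (2 * max x 1)) / Real.log (2 * max x 1)) :=
      mul_nonneg hC.le (div_nonneg (hR0 _ h2u) h2u.le)
    exact add_pos_of_nonneg_of_pos (add_nonneg ht1 ht2) (Real.exp_pos _)
  · -- bounded
    refine ⟨C * (R (Real.log 2) / Real.log 2) * (1 + 1 / Real.log 2)
        + C * (R (Real.log 2) / Real.log 2) + 1, fun x hx => ?_⟩
    have hu : (1:ℝ) ≤ max x 1 := le_max_right _ _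
    have hu0 : (0:ℝ) < max x 1 := by linarith
    have h2u : 0 < Real.log (2 * max x 1) := Real.log_pos (by linarith)
    have e1 : (1 + Real.log (max x 1) / Real.log 2) / max x 1 ≤ 1 + 1 / Real.log 2 := by
      rw [div_le_iff₀ hu0]
      have hl : Real.log (max x 1) ≤ max x 1 := Real.log_le_self hu0.le
      have hl2 : Real.log (max x 1) / Real.log 2 ≤ max x 1 / Real.log 2 := by gcongr
      have : (1 + 1 / Real.log 2) * max x 1 = max x 1 + max x 1 / Real.log 2 := by ring
      rw [this]; linarith
    have e2 : R (Real.log (2 * max x 1)) / Real.log (2 * max x 1)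
        ≤ R (Real.log 2) / Real.log 2 := by
      refine hRquot _ _ hL2 ?_
      have : (2:ℝ) ≤ 2 * max x 1 := by linarith
      exact Real.log_le_log (by norm_num) this
    have e3 : Real.exp (-x) ≤ 1 := by
      rw [Real.exp_le_one_iff]; linarith
    have g1 : C * (R (Real.log 2) / Real.log 2) *
        ((1 + Real.log (max x 1) / Real.log 2) / max x 1)
        ≤ C * (R (Real.log 2) / Real.log 2) * (1 + 1 / Real.log 2) :=
      mul_le_mul_of_nonneg_left e1 (mul_nonneg hC.le hφL2)
    have g2 : C * (R (Real.log (2 * max x 1)) / Real.log (2 * max x 1))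
        ≤ C * (R (Real.log 2) / Real.log 2) :=
      mul_le_mul_of_nonneg_left e2 hC.le
    linarith
  · -- tendsto 0
    have hmax : Tendsto (fun t : ℝ => max t 1) atTop atTop :=
      tendsto_atTop_mono (fun t => le_max_left t 1) tendsto_id
    have hlog2u : Tendsto (fun t : ℝ => Real.log (2 * max t 1)) atTop atTop :=
      Real.tendsto_log_atTop.comp (hmax.const_mul_atTop two_pos)
    have h2 : Tendsto (fun t : ℝ => C * (R (Real.log (2 * max t 1)) /
        Real.log (2 * max t 1))) atTop (nhds 0) := by
      have := (hRlim.comp hlog2u).const_mul C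
      simpa using this
    have hinv : Tendsto (fun t : ℝ => (max t 1)⁻¹) atTop (nhds 0) :=
      tendsto_inv_atTop_zero.comp hmax
    have hlogdiv : Tendsto (fun t : ℝ => Real.log (max t 1) / max t 1) atTop (nhds 0) :=
      Real.isLittleO_log_id_atTop.tendsto_div_nhds_zero.comp hmax
    have key : Tendsto (fun t : ℝ =>
        (1 + Real.log (max t 1) / Real.log 2) / max t 1) atTop (nhds 0) := by
      have heq : ∀ t : ℝ, (1 + Real.log (max t 1) / Real.log 2) / max t 1
          = (max t 1)⁻¹ + (Real.log (max t 1) / max t 1) * (Real.log 2)⁻¹ := by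
        intro t
        ring
      simp only [heq]
      simpa using hinv.add (hlogdiv.mul_const (Real.log 2)⁻¹)
    have h1 : Tendsto (fun t : ℝ => C * (R (Real.log 2) / Real.log 2) *
        ((1 + Real.log (max t 1) / Real.log 2) / max t 1)) atTop (nhds 0) := by
      have := key.const_mul (C * (R (Real.log 2) / Real.log 2))
      simpa using this
    have h3 : Tendsto (fun t : ℝ => Real.exp (-t)) atTop (nhds 0) :=
      Real.tendsto_exp_neg_atTop_nhds_zero
    simpa using (h1.add h2).add h3
  · -- main inequality
    intro i j hi hij
    have hi2 : (2:ℝ) ≤ (i:ℝ) := by exact_mod_cast hi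
    have hij' : (i:ℝ) ≤ (j:ℝ) := by exact_mod_cast hij
    have hi0 : (0:ℝ) < i := by linarith
    have hj0 : (0:ℝ) < j := by linarith
    set t := (j:ℝ) / (i:ℝ) with hT
    have ht1 : (1:ℝ) ≤ t := (one_le_div hi0).mpr hij'
    have ht0 : (0:ℝ) < t := by linarith
    have hmaxt : max t 1 = t := max_eq_left ht1
    set li := Real.log (i:ℝ) with hli_def
    set lj := Real.log (j:ℝ) with hlj_def
    have hli : Real.log 2 ≤ li := Real.log_le_log (by norm_num) hi2
    have hli0 : 0 < li := lt_of_lt_of_le hL2 hli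
    have hlij : li ≤ lj := Real.log_le_log hi0 hij'
    have hlj0 : 0 < lj := lt_of_lt_of_le hli0 hlij
    have hlt : Real.log t = lj - li := Real.log_div hj0.ne' hi0.ne'
    -- bound for the second term
    have h2tj : 2 * t ≤ (j:ℝ) := by
      have h' : 2 * (j:ℝ) / i ≤ j := (div_le_iff₀ hi0).mpr (by nlinarith)
      calc 2 * t = 2 * (j:ℝ) / i := by rw [hT, mul_div_assoc]
        _ ≤ j := h'
    have h2t0 : 0 < Real.log (2 * t) := Real.log_pos (by linarith)
    have h2t : Real.log (2 * t) ≤ lj := Real.log_le_log (by linarith) h2tj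
    have hφmono : R lj / lj ≤ R (Real.log (2 * t)) / Real.log (2 * t) :=
      hRquot _ _ h2t0 h2t
    have hKB : (j:ℝ) * R li / lj ≤ ((i:ℝ) + j) * (R (Real.log (2 * t)) / Real.log (2 * t)) := by
      have s1 : (j:ℝ) * R li / lj ≤ (j:ℝ) * (R lj / lj) := by
        rw [mul_div_assoc]
        have : R li / lj ≤ R lj / lj := by
          gcongr
          exact hRmono li lj hli0 hlij
        exact mul_le_mul_of_nonneg_left this hj0.le
      have s2 : (j:ℝ) * (R lj / lj) ≤ (j:ℝ) * (R (Real.log (2 * t)) / Real.log (2 * t)) :=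
        mul_le_mul_of_nonneg_left hφmono hj0.le
      have s3 : (j:ℝ) * (R (Real.log (2 * t)) / Real.log (2 * t))
          ≤ ((i:ℝ) + j) * (R (Real.log (2 * t)) / Real.log (2 * t)) :=
        mul_le_mul_of_nonneg_right (by linarith) (div_nonneg (hR0 _ h2t0) h2t0.le)
      linarith
    -- bound for the first term
    have hA1 : R lj ≤ (R (Real.log 2) / Real.log 2) * lj := by
      have h := hRquot (Real.log 2) lj hL2 (le_trans hli hlij)
      exact (div_le_iff₀ hlj0).mp h
    have hA2 : lj ≤ li * (1 + (lj - li) / Real.log 2) := by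
      have key : lj * Real.log 2 ≤ li * (Real.log 2 + (lj - li)) := by
        nlinarith [mul_nonneg (sub_nonneg.2 hlij) (sub_nonneg.2 hli)]
      have heq : li * (1 + (lj - li) / Real.log 2)
          = li * (Real.log 2 + (lj - li)) / Real.log 2 := by
        field_simp
      rw [heq, le_div_iff₀ hL2]
      exact key
    have hiT : (i:ℝ) ≤ ((i:ℝ) + j) / t := by
      rw [le_div_iff₀ ht0, hT]
      have he : (i:ℝ) * ((j:ℝ) / i) = j := by field_simp
      rw [he]; linarith
    have hKA : (i:ℝ) * R lj / li ≤ ((i:ℝ) + j) *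
        ((R (Real.log 2) / Real.log 2) * ((1 + (lj - li) / Real.log 2) / t)) := by
      have q1 : R lj / li ≤ (R (Real.log 2) / Real.log 2) * (1 + (lj - li) / Real.log 2) := by
        rw [div_le_iff₀ hli0]
        calc R lj ≤ (R (Real.log 2) / Real.log 2) * lj := hA1
          _ ≤ (R (Real.log 2) / Real.log 2) * (li * (1 + (lj - li) / Real.log 2)) :=
            mul_le_mul_of_nonneg_left hA2 hφL2
          _ = (R (Real.log 2) / Real.log 2) * (1 + (lj - li) / Real.log 2) * li := by ring
      have hq1' : 0 ≤ (R (Real.log 2) / Real.log 2) * (1 + (lj - li) / Real.log 2) :=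
        mul_nonneg hφL2 (by
          have : 0 ≤ (lj - li) / Real.log 2 := div_nonneg (by linarith) hL2.le
          linarith)
      calc (i:ℝ) * R lj / li = (i:ℝ) * (R lj / li) := by rw [mul_div_assoc]
        _ ≤ (i:ℝ) * ((R (Real.log 2) / Real.log 2) * (1 + (lj - li) / Real.log 2)) :=
          mul_le_mul_of_nonneg_left q1 hi0.le
        _ ≤ (((i:ℝ) + j) / t) * ((R (Real.log 2) / Real.log 2) * (1 + (lj - li) / Real.log 2)) :=
          mul_le_mul_of_nonneg_right hiT hq1'
        _ = ((i:ℝ) + j) * ((R (Real.log 2) / Real.log 2) * ((1 + (lj - li) / Real.log 2) / t)) := by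
          ring
    have hmain := haR i j hi (le_trans hi hij)
    have e1 : C * ((i:ℝ) * R lj / li) ≤ ((i:ℝ) + j) *
        (C * (R (Real.log 2) / Real.log 2) * ((1 + (lj - li) / Real.log 2) / t)) := by
      have e := mul_le_mul_of_nonneg_left hKA hC.le
      exact e.trans_eq (by ring)
    have e2 : C * ((j:ℝ) * R li / lj) ≤ ((i:ℝ) + j) *
        (C * (R (Real.log (2 * t)) / Real.log (2 * t))) := by
      have e := mul_le_mul_of_nonneg_left hKB hC.le
      exact e.trans_eq (by ring)
    have hexp : 0 ≤ ((i:ℝ) + j) * Real.exp (-t) :=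
      mul_nonneg (by linarith) (Real.exp_pos _).le
    show a i j ≤ ((i:ℝ) + j) * (C * (R (Real.log 2) / Real.log 2) *
        ((1 + Real.log (max t 1) / Real.log 2) / max t 1)
        + C * (R (Real.log (2 * max t 1)) / Real.log (2 * max t 1)) + Real.exp (-t))
    rw [hmaxt, hlt, mul_add, mul_add]
    have hsum : a i j ≤ C * ((i:ℝ) * R lj / li) + C * ((j:ℝ) * R li / lj) := by
      calc a i j ≤ C * ((i:ℝ) * R lj / li + (j:ℝ) * R li / lj) := hmain
        _ = C * ((i:ℝ) * R lj / li) + C * ((j:ℝ) * R li / lj) := by ring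
    linarith
end
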